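/- lim_{j→∞} 2^{j(2β−1)} (f_{G⋆ψ_j})^{⋆2}(0) = C_G(0)² ∫_ℝ |ψ̂(η)|⁴ |η|^{2β−2} dη, where (f_{G⋆ψ_j})^{⋆2}(0) = ∫_ℝ f_{G⋆ψ_j}(λ) f_{G⋆ψ_j}(−λ) dλ, and the limiting integral on the right-hand side is finite. -/

import Mathlib

open MeasureTheory Filter

/-- Fourier transform `ψ̂(λ) = ∫ e^{-iλt} ψ(t) dt`. -/
noncomputable def fhat (ψ : ℝ → ℝ) (l : ℝ) : ℂ :=
  ∫ t : ℝ, Complex.exp (-(Complex.I * (l : ℂ) * (t : ℂ))) * (ψ t : ℂ)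

/-!
Substituting `η = 2^j λ` and using the evenness of `C_G` and of `|ψ̂|`, the rescaled quantity
`2^{j(2β-1)} (f_{G⋆ψ_j})^{⋆2}(0)` becomes `∫ C_G(2^{-j} η)² |ψ̂(η)|⁴ |η|^{2β-2} dη`.
The decay `|ψ̂(η)| ≤ K e^{-κ|η|} |η|^α` makes `|ψ̂|⁴ |η|^{2β-2}` integrable, so dominated
convergence with the bounded continuous factor `C_G(2^{-j} η)² → C_G(0)²` gives the limit.
-/

open Set Topology

theorem integrable_comp_abs_of_integrableOn_Ioi {E : Type*} [NormedAddCommGroup E] {f : ℝ → E}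
    (hf : IntegrableOn f (Ioi 0)) : Integrable (fun x => f |x|) := by
  have hpos : IntegrableOn (fun x => f |x|) (Ioi 0) :=
    hf.congr_fun (fun x hx => by rw [abs_of_pos hx]) measurableSet_Ioi
  have hneg : IntegrableOn (fun x => f |x|) (Iio 0) := by
    rw [← (Measure.measurePreserving_neg volume).integrableOn_comp_preimage
      (Homeomorph.neg ℝ).measurableEmbedding]
    simpa [Function.comp_def] using hpos
  rw [← integrableOn_univ, ← Iio_union_Ici]
  exact hneg.union ((integrableOn_Ici_iff_integrableOn_Ioi (by simp)).2 hpos)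

theorem integrable_abs_rpow_mul_exp_neg_mul_abs {b s : ℝ} (hb : 0 < b) (hs : -1 < s) :
    Integrable (fun y : ℝ => |y| ^ s * Real.exp (-b * |y|)) :=
  integrable_comp_abs_of_integrableOn_Ioi (f := fun x => x ^ s * Real.exp (-b * x)) <| by
    simpa using integrableOn_rpow_mul_exp_neg_mul_rpow hs one_pos hb

theorem integrable_norm_pow_mul_abs_rpow_of_norm_le {E : Type*} [NormedAddCommGroup E]
    {g : ℝ → E} (hg : AEStronglyMeasurable g) {K κ α s : ℝ} {n : ℕ} (hn : n ≠ 0) (hκ : 0 < κ)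
    (hs : -1 < n * α + s) (hbound : ∀ y, ‖g y‖ ≤ K * Real.exp (-κ * |y|) * |y| ^ α) :
    Integrable (fun y => ‖g y‖ ^ n * |y| ^ s) := by
  have hdom := (integrable_abs_rpow_mul_exp_neg_mul_abs (b := n * κ) (by positivity) hs).const_mul
    (K ^ n)
  refine hdom.mono' ((hg.norm.pow n).mul
    (continuous_abs.measurable.pow_const s).aestronglyMeasurable) ?_
  filter_upwards [volume.ae_ne 0] with y hy
  have hy' : 0 < |y| := abs_pos.2 hy
  rw [Real.norm_of_nonneg (by positivity)]
  calc ‖g y‖ ^ n * |y| ^ s ≤ (K * Real.exp (-κ * |y|) * |y| ^ α) ^ n * |y| ^ s := by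
        gcongr; exact hbound y
    _ = K ^ n * (|y| ^ (n * α + s) * Real.exp (-(n * κ) * |y|)) := by
        rw [Real.rpow_add hy', mul_comm (n : ℝ) α, Real.rpow_mul_natCast hy'.le,
          show -(n * κ) * |y| = n * (-κ * |y|) by ring, Real.exp_nat_mul]
        ring

theorem tendsto_integral_comp_mul_mul {ι : Type*} {l : Filter ι} [l.IsCountablyGenerated]
    {μ : Measure ℝ} {c F : ℝ → ℝ} (hc : Continuous c) {M : ℝ} (hcM : ∀ x, |c x| ≤ M)
    (hF : Integrable F μ) {t : ι → ℝ} (ht : Tendsto t l (𝓝 0)) :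
    Tendsto (fun i => ∫ y, c (t i * y) * F y ∂μ) l (𝓝 (c 0 * ∫ y, F y ∂μ)) := by
  rw [← integral_const_mul]
  refine tendsto_integral_filter_of_dominated_convergence (fun y => M * ‖F y‖)
    (Eventually.of_forall fun i =>
      (hc.comp (continuous_const.mul continuous_id)).aestronglyMeasurable.mul hF.1)
    (Eventually.of_forall fun i => Eventually.of_forall fun y => ?_) (hF.norm.const_mul M)
    (Eventually.of_forall fun y => ((hc.tendsto 0).comp ?_).mul_const (F y))
  · rw [norm_mul]
    exact mul_le_mul_of_nonneg_right (hcM _) (norm_nonneg _)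
  · simpa using ht.mul_const y

theorem integral_comp_mul_mul_abs_rpow (h : ℝ → ℝ) (s : ℝ) {a : ℝ} (ha : 0 < a) :
    ∫ l, h (a * l) * |l| ^ s = (a ^ (s + 1))⁻¹ * ∫ y, h y * |y| ^ s := by
  have hsub := Measure.integral_comp_mul_left (fun y => h y * |a⁻¹ * y| ^ s) a
  simp only [inv_mul_cancel_left₀ ha.ne', abs_mul, abs_inv, abs_of_pos ha,
    Real.mul_rpow (inv_nonneg.2 ha.le) (abs_nonneg _), mul_left_comm (h _),
    integral_const_mul, smul_eq_mul] at hsub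
  rw [hsub, ← mul_assoc, Real.rpow_add_one ha.ne', Real.inv_rpow ha.le, mul_inv]
  ring

theorem fhat_neg (ψ : ℝ → ℝ) (l : ℝ) : fhat ψ (-l) = starRingEnd ℂ (fhat ψ l) := by
  rw [fhat, fhat, ← integral_conj]
  congr 1 with t
  rw [map_mul, ← Complex.exp_conj, Complex.conj_ofReal]
  simp only [map_neg, map_mul, Complex.conj_I, Complex.conj_ofReal, Complex.ofReal_neg]
  ring_nf

theorem norm_fhat_neg (ψ : ℝ → ℝ) (l : ℝ) : ‖fhat ψ (-l)‖ = ‖fhat ψ l‖ := by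
  rw [fhat_neg, Complex.norm_conj]

theorem mul_comp_neg_of_eq_mul_abs_rpow {C f : ℝ → ℝ} {β : ℝ} (hC : ∀ x, C (-x) = C x)
    (hf : ∀ x, x ≠ 0 → f x = C x * |x| ^ (β - 1)) {x : ℝ} (hx : x ≠ 0) :
    f x * f (-x) = C x ^ 2 * |x| ^ (2 * β - 2) := by
  rw [hf x hx, hf (-x) (neg_ne_zero.2 hx), hC, abs_neg,
    show 2 * β - 2 = (β - 1) + (β - 1) by ring, Real.rpow_add (abs_pos.2 hx)]
  ring

theorem rpow_mul_integral_mul_comp_neg_eq {C f g : ℝ → ℝ} {β a : ℝ} (hC : ∀ x, C (-x) = C x)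
    (hf : ∀ x, x ≠ 0 → f x = C x * |x| ^ (β - 1)) (hg : ∀ x, g (-x) = g x) (ha : 0 < a) :
    a ^ (2 * β - 1) * ∫ l, f l * g (a * l) ^ 2 * (f (-l) * g (a * -l) ^ 2)
      = ∫ y, C (a⁻¹ * y) ^ 2 * (g y ^ 4 * |y| ^ (2 * β - 2)) := by
  have hpt : (fun l => f l * g (a * l) ^ 2 * (f (-l) * g (a * -l) ^ 2)) =ᵐ[volume]
      fun l => C (a⁻¹ * (a * l)) ^ 2 * g (a * l) ^ 4 * |l| ^ (2 * β - 2) := by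
    filter_upwards [volume.ae_ne 0] with l hl
    rw [mul_neg, hg, inv_mul_cancel_left₀ ha.ne']
    linear_combination g (a * l) ^ 4 * mul_comp_neg_of_eq_mul_abs_rpow hC hf hl
  rw [integral_congr_ae hpt,
    integral_comp_mul_mul_abs_rpow (fun y => C (a⁻¹ * y) ^ 2 * g y ^ 4) _ ha, ← mul_assoc,
    show 2 * β - 2 + 1 = 2 * β - 1 by ring, mul_inv_cancel₀ (by positivity), one_mul]
  simp only [mul_assoc]

theorem stmt_11_general
    (β : ℝ) (hβ : β ∈ Set.Ioo (0 : ℝ) 1)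
    (C_G : ℝ → ℝ) (hCG_cont : Continuous C_G) (hCG_bdd : ∃ M : ℝ, ∀ x, C_G x ≤ M)
    (hCG_nonneg : ∀ x, 0 ≤ C_G x) (hCG_even : ∀ x, C_G (-x) = C_G x)
    (f_G : ℝ → ℝ)
    (hfG : ∀ x : ℝ, x ≠ 0 → f_G x = C_G x * |x| ^ (β - 1))
    (ψ : ℝ → ℝ)
    (α K κ : ℝ) (hα : 1 ≤ α) (hκ : 0 < κ)
    (Cψ : ℝ → ℂ) (hCψ_cont : Continuous Cψ)
    (hCψ_bdd : ∀ l : ℝ, ‖Cψ l‖ ≤ K * Real.exp (-κ * |l|))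
    (hhat : ∀ l : ℝ, fhat ψ l = Cψ l * ((|l| ^ α : ℝ) : ℂ))
    (fGp : ℕ → ℝ → ℝ)
    (hfGp : ∀ j : ℕ, ∀ l : ℝ,
      fGp j l = f_G l * ‖fhat ψ ((2 : ℝ) ^ j * l)‖ ^ 2) :
    Integrable (fun η : ℝ => ‖fhat ψ η‖ ^ 4 * |η| ^ (2 * β - 2)) ∧
    Tendsto
      (fun j : ℕ => (2 : ℝ) ^ ((j : ℝ) * (2 * β - 1)) * ∫ l : ℝ, fGp j l * fGp j (-l))
      atTop
      (nhds ((C_G 0) ^ 2 * ∫ η : ℝ, ‖fhat ψ η‖ ^ 4 * |η| ^ (2 * β - 2))) := by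
  obtain ⟨M, hM⟩ := hCG_bdd
  have hnorm (l : ℝ) : ‖fhat ψ l‖ = ‖Cψ l‖ * |l| ^ α := by
    rw [hhat, norm_mul, Complex.norm_real, Real.norm_of_nonneg (by positivity)]
  have hcont : Continuous (fhat ψ) := by
    rw [funext hhat]
    exact hCψ_cont.mul (Complex.continuous_ofReal.comp
      (continuous_abs.rpow_const fun _ => Or.inr (by linarith)))
  have hF : Integrable (fun η : ℝ => ‖fhat ψ η‖ ^ 4 * |η| ^ (2 * β - 2)) :=
    integrable_norm_pow_mul_abs_rpow_of_norm_le (n := 4) (α := α) hcont.aestronglyMeasurable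
      four_ne_zero hκ (by push_cast; linarith [hβ.1]) fun l => by
        rw [hnorm]; exact mul_le_mul_of_nonneg_right (hCψ_bdd l) (by positivity)
  refine ⟨hF, ?_⟩
  have hscale (j : ℕ) : (2 : ℝ) ^ ((j : ℝ) * (2 * β - 1)) * ∫ l, fGp j l * fGp j (-l)
      = ∫ y, C_G (((2 : ℝ) ^ j)⁻¹ * y) ^ 2 * (‖fhat ψ y‖ ^ 4 * |y| ^ (2 * β - 2)) := by
    simp only [hfGp]
    rw [Real.rpow_mul zero_le_two, Real.rpow_natCast]
    exact rpow_mul_integral_mul_comp_neg_eq (g := fun y => ‖fhat ψ y‖) hCG_even hfG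
      (norm_fhat_neg ψ) (by positivity)
  simp only [hscale]
  exact tendsto_integral_comp_mul_mul (hCG_cont.pow 2)
    (fun x => (abs_of_nonneg (sq_nonneg _)).trans_le (pow_le_pow_left₀ (hCG_nonneg x) (hM x) 2))
    hF (tendsto_inv_atTop_zero.comp (tendsto_pow_atTop_atTop_of_one_lt one_lt_two))

theorem stmt_11
    (β : ℝ) (hβ : β ∈ Set.Ioo (0 : ℝ) 1)
    (C_G : ℝ → ℝ) (hCG_cont : Continuous C_G) (hCG_bdd : ∃ M : ℝ, ∀ x, C_G x ≤ M)
    (hCG_nonneg : ∀ x, 0 ≤ C_G x) (hCG_even : ∀ x, C_G (-x) = C_G x)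
    (hCG0 : 0 < C_G 0)
    (f_G : ℝ → ℝ) (hfG_nonneg : ∀ x, 0 ≤ f_G x)
    (hfG : ∀ x : ℝ, x ≠ 0 → f_G x = C_G x * |x| ^ (β - 1))
    (hfG_int : Integrable f_G)
    (ψ : ℝ → ℝ) (hψ_int : Integrable ψ) (hψ_sq : Integrable (fun t => (ψ t) ^ 2))
    (hψ_zero : (∫ t : ℝ, ψ t) = 0)
    (α K κ : ℝ) (hα : 1 ≤ α) (hK : 0 < K) (hκ : 0 < κ)
    (Cψ : ℝ → ℂ) (hCψ_cont : Continuous Cψ)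
    (hCψ0 : 0 < (Cψ 0).re ∧ (Cψ 0).im = 0)
    (hCψ_bdd : ∀ l : ℝ, ‖Cψ l‖ ≤ K * Real.exp (-κ * |l|))
    (hhat : ∀ l : ℝ, fhat ψ l = Cψ l * ((|l| ^ α : ℝ) : ℂ))
    (fGp : ℕ → ℝ → ℝ)
    (hfGp : ∀ j : ℕ, ∀ l : ℝ,
      fGp j l = f_G l * ‖fhat ψ ((2 : ℝ) ^ j * l)‖ ^ 2) :
    Integrable (fun η : ℝ => ‖fhat ψ η‖ ^ 4 * |η| ^ (2 * β - 2)) ∧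
    Tendsto
      (fun j : ℕ => (2 : ℝ) ^ ((j : ℝ) * (2 * β - 1)) * ∫ l : ℝ, fGp j l * fGp j (-l))
      atTop
      (nhds ((C_G 0) ^ 2 * ∫ η : ℝ, ‖fhat ψ η‖ ^ 4 * |η| ^ (2 * β - 2))) :=
  stmt_11_general β hβ C_G hCG_cont hCG_bdd hCG_nonneg hCG_even f_G hfG ψ α K κ hα hκ Cψ hCψ_cont
    hCψ_bdd hhat fGp hfGp
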